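/- arXiv:1606.00957 — 9 statements merged into one kernel-verified Lean document; each statement's English description precedes it below -/
import Mathlib

section
/- Let 𝕊¹ and 𝕊² be metric spaces and Φ : 𝕊¹ → 2^{𝕊²}∖{∅} a set-valued mapping with nonempty values. If u : 𝕊¹×𝕊² → ℝ∪{±∞} is K-inf-compact on Gr(Φ), then the value function v(s¹) := inf_{s²∈Φ(s¹)} u(s¹,s²) is lower semi-continuous on 𝕊¹. -/
/-!
Let `xₙ → p` with `v xₙ ≤ λ`. For `λ' > λ` pick `sₙ ∈ Φ xₙ` with `u (xₙ, sₙ) < λ'`. The set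
`K = {p} ∪ {xₙ}` is compact, so the pairs `(xₙ, sₙ)` lie in the compact level set of `u` over
`Gr_K(Φ)` at height `λ'`; a subsequence converges to some `(p, s)` with `s ∈ Φ p` and
`u (p, s) ≤ λ'`. Hence `v p ≤ λ'` for every `λ' > λ`, so the real level sets of `v` are
sequentially closed, which suffices for lower semicontinuity of an `EReal`-valued function.
-/

open Filter Topology Set

/-- `f` is inf-compact on `U`: all level sets `{y ∈ U : f y ≤ λ}`, `λ ∈ ℝ`, are compact. -/
def InfCompactOn {E : Type*} [TopologicalSpace E] (f : E → EReal) (U : Set E) : Prop :=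
  ∀ lam : ℝ, IsCompact {y ∈ U | f y ≤ (lam : EReal)}

/-- `u` is `K`-inf-compact on the graph of `Φ`: for every nonempty compact `K ⊆ S1`,
the restriction of `u` to `Gr_K(Φ) = {(s¹,s²) : s¹ ∈ K, s² ∈ Φ s¹}` is inf-compact. -/
def KInfCompactOn {S1 S2 : Type*} [TopologicalSpace S1] [TopologicalSpace S2]
    (u : S1 × S2 → EReal) (Φ : S1 → Set S2) : Prop :=
  ∀ K : Set S1, K.Nonempty → IsCompact K →
    InfCompactOn u {p : S1 × S2 | p.1 ∈ K ∧ p.2 ∈ Φ p.1}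

theorem EReal.lowerSemicontinuous_of_isClosed_setOf_le_coe {α : Type*} [TopologicalSpace α]
    {f : α → EReal} (hf : ∀ r : ℝ, IsClosed {x | f x ≤ r}) : LowerSemicontinuous f := by
  refine lowerSemicontinuous_iff_isClosed_preimage.2 fun y => ?_
  have hIic : f ⁻¹' Iic y = ⋂ (r : ℝ) (_ : y < r), {x | f x ≤ r} := by
    ext x
    simp only [mem_preimage, mem_Iic, mem_iInter, mem_ofPred_eq]
    exact EReal.le_of_forall_lt_iff_le.symm
  rw [hIic]
  exact isClosed_iInter fun r => isClosed_iInter fun _ => hf r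

section ValueFunction

variable {S1 S2 : Type*} [TopologicalSpace S1] [TopologicalSpace S2]
  [FirstCountableTopology S1] [FirstCountableTopology S2] [T2Space S1]
  {Φ : S1 → Set S2} {u : S1 × S2 → EReal}

theorem KInfCompactOn.exists_mem_le_of_tendsto (hu : KInfCompactOn u Φ) {x : ℕ → S1} {p : S1}
    (hxp : Tendsto x atTop (𝓝 p)) {s : ℕ → S2} (hs : ∀ n, s n ∈ Φ (x n)) {c : ℝ}
    (hc : ∀ n, u (x n, s n) ≤ c) : ∃ t ∈ Φ p, u (p, t) ≤ c := by
  set K := insert p (range x)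
  obtain ⟨q, ⟨⟨-, hqΦ⟩, hqc⟩, φ, hφ, hqlim⟩ :=
    (hu K (insert_nonempty p _) hxp.isCompact_insert_range c).tendsto_subseq
      (x := fun n => (x n, s n)) fun n => ⟨⟨mem_insert_of_mem _ ⟨n, rfl⟩, hs n⟩, hc n⟩
  have hq : q.1 = p :=
    tendsto_nhds_unique ((continuous_fst.tendsto q).comp hqlim) (hxp.comp hφ.tendsto_atTop)
  obtain ⟨q1, q2⟩ := q
  subst hq
  exact ⟨q2, hqΦ, hqc⟩

theorem KInfCompactOn.isClosed_setOf_iInf_le (hu : KInfCompactOn u Φ) (r : ℝ) :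
    IsClosed {s1 | ⨅ s2 ∈ Φ s1, u (s1, s2) ≤ r} := by
  refine IsSeqClosed.isClosed fun x p hx hxp => ?_
  refine EReal.le_of_forall_lt_iff_le.1 fun r' hr' => ?_
  have hlt : ∀ n, ∃ s ∈ Φ (x n), u (x n, s) < r' := fun n => by
    simpa only [iInf_lt_iff, exists_prop] using (hx n).trans_lt hr'
  choose s hs hus using hlt
  obtain ⟨t, ht, hut⟩ := hu.exists_mem_le_of_tendsto hxp hs fun n => (hus n).le
  exact (iInf₂_le t ht).trans hut

end ValueFunction

theorem stmt0_general {S1 S2 : Type*} [MetricSpace S1] [MetricSpace S2]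
    (Φ : S1 → Set S2)
    (u : S1 × S2 → EReal) (hu : KInfCompactOn u Φ) :
    LowerSemicontinuous (fun s1 : S1 => ⨅ s2 ∈ Φ s1, u (s1, s2)) :=
  EReal.lowerSemicontinuous_of_isClosed_setOf_le_coe hu.isClosed_setOf_iInf_le

/-- If `u` is `K`-inf-compact on `Gr(Φ)`, then the value function
`v s¹ = inf_{s² ∈ Φ s¹} u (s¹, s²)` is lower semi-continuous. -/
theorem stmt0 {S1 S2 : Type*} [MetricSpace S1] [MetricSpace S2]
    (Φ : S1 → Set S2) (hΦ : ∀ s1, (Φ s1).Nonempty)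
    (u : S1 × S2 → EReal) (hu : KInfCompactOn u Φ) :
    LowerSemicontinuous (fun s1 : S1 => ⨅ s2 ∈ Φ s1, u (s1, s2)) :=
  stmt0_general Φ u hu
end

section
/- Let 𝕊¹ and 𝕊² be metric spaces and Φ : 𝕊¹ → 2^{𝕊²}∖{∅} a set-valued mapping with nonempty values. Assume (a) Φ is lower semi-continuous and (b) u : 𝕊¹×𝕊² → ℝ is K-inf-compact on Gr(Φ) and upper semi-continuous on Gr(Φ). Then the value function v(s¹) := inf_{s²∈Φ(s¹)} u(s¹,s²) is a real-valued continuous function on 𝕊¹, and the solution multifunction Φ*(s¹) := {s² ∈ Φ(s¹) : v(s¹) = u(s¹,s²)} is nonempty and compact-valued for every s¹ ∈ 𝕊¹ and is upper semi-continuous as a set-valued mapping. -/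
/-!
Compactness of the sublevel sets of `u (s, ·)` on `Φ s` makes the infimum `v s` attained (Cantor's
intersection theorem), and `Φ* s` is the sublevel set at level `v s`. Upper semicontinuity of `v`
follows by perturbing a minimiser, using the lower semicontinuity of `Φ` and the upper
semicontinuity of `u`. Conversely, if `x n → s` and `y n ∈ Φ (x n)` have values `u (x n, y n)`
eventually below every `c > c₀`, then all `(x n, y n)` lie in `Gr_K(Φ)` for the compact set
`K = {s} ∪ {x n}`, so they cluster at some `(s, p)` with `u (s, p) ≤ c₀`. Applied to minimisers
this gives lower semicontinuity of `v`; applied to points of `Φ* (x n)` outside an open `G ⊇ Φ* s`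
it gives a contradiction, i.e. upper semicontinuity of `Φ*`.
-/

open Filter Topology Set

/-- The value function `v s¹ = inf_{s² ∈ Φ s¹} u (s¹, s²)` (real-valued infimum). -/
noncomputable def valueFn {S1 S2 : Type*} (u : S1 × S2 → ℝ) (Φ : S1 → Set S2) (s1 : S1) : ℝ :=
  sInf ((fun s2 => u (s1, s2)) '' Φ s1)

/-- The solution multifunction `Φ* s¹ = {s² ∈ Φ s¹ : v s¹ = u (s¹, s²)}`. -/
noncomputable def solutionMap {S1 S2 : Type*} (u : S1 × S2 → ℝ) (Φ : S1 → Set S2)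
    (s1 : S1) : Set S2 :=
  {s2 ∈ Φ s1 | valueFn u Φ s1 = u (s1, s2)}

theorem exists_isMinOn_of_isCompact_sublevel {X β : Type*} [TopologicalSpace X] [T2Space X]
    [LinearOrder β] {f : X → β} {A : Set X} (hA : A.Nonempty)
    (hf : ∀ c, IsCompact {x ∈ A | f x ≤ c}) : ∃ x ∈ A, IsMinOn f A x := by
  obtain ⟨a, ha⟩ := hA
  have : Nonempty A := ⟨⟨a, ha⟩⟩
  have hdir : Directed (· ⊇ ·) fun z : A => {x ∈ A | f x ≤ f z} := by
    intro i j
    rcases le_total (f i) (f j) with h | h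
    · exact ⟨i, subset_rfl, fun x hx => ⟨hx.1, hx.2.trans h⟩⟩
    · exact ⟨j, fun x hx => ⟨hx.1, hx.2.trans h⟩, subset_rfl⟩
  obtain ⟨x, hx⟩ := IsCompact.nonempty_iInter_of_directed_nonempty_isCompact_isClosed _ hdir
    (fun z => ⟨z, z.2, le_rfl⟩) (fun z => hf _) (fun z => (hf _).isClosed)
  rw [mem_iInter] at hx
  exact ⟨x, (hx ⟨a, ha⟩).1, fun z hz => (hx ⟨z, hz⟩).2⟩

section

variable {S1 S2 : Type*} {Φ : S1 → Set S2} {u : S1 × S2 → ℝ} {s : S1}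

theorem valueFn_eq_of_isMinOn {y : S2} (hy : y ∈ Φ s)
    (hmin : IsMinOn (fun z => u (s, z)) (Φ s) y) : valueFn u Φ s = u (s, y) :=
  IsLeast.csInf_eq ⟨mem_image_of_mem _ hy, forall_mem_image.2 hmin⟩

theorem valueFn_le_of_mem (hattain : ∃ y ∈ Φ s, IsMinOn (fun z => u (s, z)) (Φ s) y) {z : S2}
    (hz : z ∈ Φ s) : valueFn u Φ s ≤ u (s, z) := by
  obtain ⟨y, hy, hmin⟩ := hattain
  rw [valueFn_eq_of_isMinOn hy hmin]
  exact hmin hz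

theorem solutionMap_nonempty (hattain : ∃ y ∈ Φ s, IsMinOn (fun z => u (s, z)) (Φ s) y) :
    (solutionMap u Φ s).Nonempty := by
  obtain ⟨y, hy, hmin⟩ := hattain
  exact ⟨y, hy, valueFn_eq_of_isMinOn hy hmin⟩

theorem solutionMap_eq_sublevel (hattain : ∃ y ∈ Φ s, IsMinOn (fun z => u (s, z)) (Φ s) y) :
    solutionMap u Φ s = {z ∈ Φ s | u (s, z) ≤ valueFn u Φ s} := by
  ext z
  exact and_congr_right fun hz => ⟨Eq.ge, (valueFn_le_of_mem hattain hz).antisymm⟩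

variable [TopologicalSpace S1] [TopologicalSpace S2]

theorem upperSemicontinuous_valueFn
    (hΦ : ∀ s : S1, ∀ G : Set S2, IsOpen G → (Φ s ∩ G).Nonempty →
      {s' : S1 | (Φ s' ∩ G).Nonempty} ∈ 𝓝 s)
    (hu : UpperSemicontinuousOn u {p : S1 × S2 | p.2 ∈ Φ p.1})
    (hattain : ∀ s, ∃ y ∈ Φ s, IsMinOn (fun z => u (s, z)) (Φ s) y) :
    UpperSemicontinuous (valueFn u Φ) := by
  intro s c hc
  obtain ⟨y, hy, hmin⟩ := hattain s
  rw [valueFn_eq_of_isMinOn hy hmin] at hc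
  obtain ⟨U, V, hU, hsU, hV, hyV, hUV⟩ :=
    mem_nhds_prod_iff'.1 (eventually_nhdsWithin_iff.1 (hu (s, y) hy c hc))
  filter_upwards [hΦ s V hV ⟨y, hy, hyV⟩, hU.mem_nhds hsU] with s' ⟨z, hz, hzV⟩ hs'U
  exact (valueFn_le_of_mem (hattain s') hz).trans_lt (hUV ⟨hs'U, hzV⟩ hz)

theorem KInfCompactOn.isCompact_sublevel (hu : KInfCompactOn (fun p => (u p : EReal)) Φ)
    {K : Set S1} (hK : IsCompact K) (c : ℝ) :
    IsCompact {p : S1 × S2 | p.1 ∈ K ∧ p.2 ∈ Φ p.1 ∧ u p ≤ c} := by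
  rcases K.eq_empty_or_nonempty with rfl | hKne
  · simp
  simpa only [EReal.coe_le_coe_iff, mem_ofPred_eq, and_assoc] using hu K hKne hK c

theorem KInfCompactOn.isCompact_fiber_sublevel (hu : KInfCompactOn (fun p => (u p : EReal)) Φ)
    (s : S1) (c : ℝ) : IsCompact {z ∈ Φ s | u (s, z) ≤ c} := by
  convert (hu.isCompact_sublevel isCompact_singleton c).image continuous_snd
  ext z
  constructor
  · exact fun hz => ⟨(s, z), ⟨rfl, hz⟩, rfl⟩
  · rintro ⟨⟨s', z⟩, ⟨rfl, hz⟩, rfl⟩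
    exact hz

theorem KInfCompactOn.exists_isMinOn [T2Space S2] (hu : KInfCompactOn (fun p => (u p : EReal)) Φ)
    (hs : (Φ s).Nonempty) : ∃ y ∈ Φ s, IsMinOn (fun z => u (s, z)) (Φ s) y :=
  exists_isMinOn_of_isCompact_sublevel hs (hu.isCompact_fiber_sublevel s)

theorem KInfCompactOn.exists_mapClusterPt [T2Space S1] [T2Space S2]
    (hu : KInfCompactOn (fun p => (u p : EReal)) Φ) {x : ℕ → S1} {y : ℕ → S2}
    (hx : Tendsto x atTop (𝓝 s)) (hy : ∀ n, y n ∈ Φ (x n)) {c₀ : ℝ}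
    (hle : ∀ c > c₀, ∀ᶠ n in atTop, u (x n, y n) ≤ c) :
    ∃ p ∈ Φ s, u (s, p) ≤ c₀ ∧ MapClusterPt p atTop y := by
  set K := insert s (range x)
  have hL := hu.isCompact_sublevel hx.isCompact_insert_range
  have hev : ∀ c > c₀, ∀ᶠ n in atTop, (x n, y n) ∈ {p | p.1 ∈ K ∧ p.2 ∈ Φ p.1 ∧ u p ≤ c} :=
    fun c hc => (hle c hc).mono fun n hn => ⟨mem_insert_of_mem _ (mem_range_self n), hy n, hn⟩
  obtain ⟨⟨s', p⟩, ⟨-, hp, -⟩, hclus⟩ :=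
    (hL (c₀ + 1)).exists_mapClusterPt (tendsto_principal.2 (hev _ (lt_add_one c₀)))
  obtain rfl : s' = s := by
    have hs' : MapClusterPt s' atTop x := hclus.continuousAt_comp continuous_fst.continuousAt
    exact eq_of_nhds_neBot (hs'.clusterPt.mono hx)
  refine ⟨p, hp, le_of_forall_gt_imp_ge_of_dense fun c hc => ?_, ?_⟩
  · exact ((hL c).isClosed.mem_of_mapClusterPt hclus (hev c hc)).2.2
  · exact hclus.continuousAt_comp continuous_snd.continuousAt

theorem KInfCompactOn.lowerSemicontinuous_valueFn [FirstCountableTopology S1] [T2Space S1]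
    [T2Space S2] (hu : KInfCompactOn (fun p => (u p : EReal)) Φ)
    (hattain : ∀ s, ∃ y ∈ Φ s, IsMinOn (fun z => u (s, z)) (Φ s) y) :
    LowerSemicontinuous (valueFn u Φ) := by
  intro s c hc
  by_contra h
  obtain ⟨x, hx, hxc⟩ := frequently_iff_seq_forall.1 (not_eventually.1 h)
  choose y hy hmin using fun n => hattain (x n)
  have hle : ∀ c' > c, ∀ᶠ n in atTop, u (x n, y n) ≤ c' := fun c' hc' =>
    .of_forall fun n => by
      rw [← valueFn_eq_of_isMinOn (hy n) (hmin n)]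
      exact (not_lt.1 (hxc n)).trans hc'.le
  obtain ⟨p, hp, hpc, -⟩ := hu.exists_mapClusterPt hx hy hle
  exact hc.not_ge ((valueFn_le_of_mem (hattain s) hp).trans hpc)

theorem KInfCompactOn.eventually_solutionMap_subset [FirstCountableTopology S1] [T2Space S1]
    [T2Space S2] (hu : KInfCompactOn (fun p => (u p : EReal)) Φ)
    (hattain : ∀ s, ∃ y ∈ Φ s, IsMinOn (fun z => u (s, z)) (Φ s) y)
    (hv : UpperSemicontinuous (valueFn u Φ)) {G : Set S2} (hG : IsOpen G)
    (hsG : solutionMap u Φ s ⊆ G) : ∀ᶠ s' in 𝓝 s, solutionMap u Φ s' ⊆ G := by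
  by_contra h
  obtain ⟨x, hx, hxG⟩ := frequently_iff_seq_forall.1 (not_eventually.1 h)
  choose y hy hyG using fun n => not_subset.1 (hxG n)
  have hle : ∀ c > valueFn u Φ s, ∀ᶠ n in atTop, u (x n, y n) ≤ c := fun c hc =>
    (hx.eventually (hv s c hc)).mono fun n hn => (hy n).2 ▸ hn.le
  obtain ⟨p, hp, hpv, hclus⟩ := hu.exists_mapClusterPt hx (fun n => (hy n).1) hle
  have hpG : p ∈ G := hsG ⟨hp, (valueFn_le_of_mem (hattain s) hp).antisymm hpv⟩
  obtain ⟨n, hn⟩ := (hclus.frequently (hG.mem_nhds hpG)).exists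
  exact hyG n hn

end

/-- Berge's maximum theorem for possibly noncompact sets: if `Φ` is lower semi-continuous
with nonempty values, and `u` is `K`-inf-compact and upper semi-continuous on `Gr(Φ)`, then the
value function `v` is continuous and real-valued, and the solution multifunction `Φ*` is
nonempty compact-valued and upper semi-continuous. -/
theorem stmt1 {S1 S2 : Type*} [MetricSpace S1] [MetricSpace S2]
    (Φ : S1 → Set S2) (hΦne : ∀ s1, (Φ s1).Nonempty)
    (hΦlsc : ∀ s1 : S1, ∀ G : Set S2, IsOpen G → (Φ s1 ∩ G).Nonempty →
      {s : S1 | (Φ s ∩ G).Nonempty} ∈ nhds s1)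
    (u : S1 × S2 → ℝ)
    (hKinf : KInfCompactOn (fun p => ((u p : ℝ) : EReal)) Φ)
    (husc : UpperSemicontinuousOn u {p : S1 × S2 | p.2 ∈ Φ p.1}) :
    Continuous (valueFn u Φ) ∧
    (∀ s1, (solutionMap u Φ s1).Nonempty) ∧
    (∀ s1, IsCompact (solutionMap u Φ s1)) ∧
    (∀ s1 : S1, ∀ G : Set S2, IsOpen G → solutionMap u Φ s1 ⊆ G →
      {s : S1 | solutionMap u Φ s ⊆ G} ∈ nhds s1) := by
  have hattain s := hKinf.exists_isMinOn (hΦne s)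
  have hv_usc := upperSemicontinuous_valueFn hΦlsc husc hattain
  refine ⟨continuous_iff_lower_upperSemicontinuous.2
      ⟨hKinf.lowerSemicontinuous_valueFn hattain, hv_usc⟩,
    fun s => solutionMap_nonempty (hattain s), fun s => ?_,
    fun s G hG hsG => hKinf.eventually_solutionMap_subset hattain hv_usc hG hsG⟩
  rw [solutionMap_eq_sublevel (hattain s)]
  exact hKinf.isCompact_fiber_sublevel s _
end

section
/- Let 𝕊¹ and 𝕊² be metric spaces and Φ : 𝕊¹ → 2^{𝕊²}∖{∅} a set-valued mapping with nonempty values. If u : 𝕊¹×𝕊² → ℝ∪{±∞} is lower semi-continuous on Gr(Φ), Φ is upper semi-continuous, and Φ(s¹) is compact for every s¹ ∈ 𝕊¹, then u is K-inf-compact on Gr(Φ). -/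
open Filter Topology Set

/-- A cluster point `x ∈ K` of the first coordinates of a filter on the graph forces, by upper
semi-continuity, the second coordinates near `x` into every neighbourhood of `Φ x`; compactness
of `Φ x` then supplies a cluster point above `x`. -/
theorem IsCompact.setOf_fst_mem_snd_mem {X Y : Type*} [TopologicalSpace X] [TopologicalSpace Y]
    {Φ : X → Set Y} (husc : ∀ x G, IsOpen G → Φ x ⊆ G → ∀ᶠ x' in 𝓝 x, Φ x' ⊆ G)
    (hΦ : ∀ x, IsCompact (Φ x)) {K : Set X} (hK : IsCompact K) :
    IsCompact {p : X × Y | p.1 ∈ K ∧ p.2 ∈ Φ p.1} := by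
  intro f _ hf
  have hgraph : {p : X × Y | p.1 ∈ K ∧ p.2 ∈ Φ p.1} ∈ f := le_principal_iff.1 hf
  obtain ⟨x, hxK, hx⟩ := hK (f := map Prod.fst f) <|
    le_principal_iff.2 (mem_map.2 (mem_of_superset hgraph fun p hp => hp.1))
  set g := f ⊓ comap Prod.fst (𝓝 x)
  have hg : g.NeBot := by
    rw [← map_neBot_iff Prod.fst, Filter.push_pull, inf_comm]
    exact hx
  have hsnd : map Prod.snd g ≤ 𝓝ˢ (Φ x) := by
    refine (hasBasis_nhdsSet _).ge_iff.2 fun G ⟨hG, hΦG⟩ => ?_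
    change ∀ᶠ p in g, p.2 ∈ G
    filter_upwards [mem_inf_of_left hgraph,
      mem_inf_of_right (preimage_mem_comap (husc x G hG hΦG))] with p hp hpG
    exact hpG hp.2
  obtain ⟨t, htΦ, ht⟩ : ∃ t ∈ Φ x, ClusterPt t (map Prod.snd g) := by
    by_contra! h
    exact (map_neBot (m := Prod.snd)).ne <| ((hΦ x).disjoint_nhdsSet_left.2 fun t ht =>
      disjoint_iff.2 (not_neBot.1 (h t ht))).symm.eq_bot_of_le hsnd
  refine ⟨(x, t), ⟨hxK, htΦ⟩, ?_⟩
  rw [ClusterPt, inf_comm, ← Filter.push_pull, map_neBot_iff] at ht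
  rwa [ClusterPt, nhds_prod_eq, prod_eq_inf, inf_comm, ← inf_assoc]

theorem stmt2_general {S1 S2 : Type*} [MetricSpace S1] [MetricSpace S2]
    (Φ : S1 → Set S2)
    (hΦusc : ∀ s1 : S1, ∀ G : Set S2, IsOpen G → Φ s1 ⊆ G →
      {s : S1 | Φ s ⊆ G} ∈ nhds s1)
    (hΦcomp : ∀ s1, IsCompact (Φ s1))
    (u : S1 × S2 → EReal)
    (hlsc : LowerSemicontinuousOn u {p : S1 × S2 | p.2 ∈ Φ p.1}) :
    KInfCompactOn u Φ := by
  intro K _ hK lam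
  exact (hlsc.mono fun p hp => hp.2).isCompact_inter_preimage_Iic
    (hK.setOf_fst_mem_snd_mem hΦusc hΦcomp) lam

/-- If `u` is lower semi-continuous on `Gr(Φ)`, `Φ` is upper semi-continuous with nonempty
compact values, then `u` is `K`-inf-compact on `Gr(Φ)`. -/
theorem stmt2 {S1 S2 : Type*} [MetricSpace S1] [MetricSpace S2]
    (Φ : S1 → Set S2) (hΦne : ∀ s1, (Φ s1).Nonempty)
    (hΦusc : ∀ s1 : S1, ∀ G : Set S2, IsOpen G → Φ s1 ⊆ G →
      {s : S1 | Φ s ⊆ G} ∈ nhds s1)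
    (hΦcomp : ∀ s1, IsCompact (Φ s1))
    (u : S1 × S2 → EReal)
    (hlsc : LowerSemicontinuousOn u {p : S1 × S2 | p.2 ∈ Φ p.1}) :
    KInfCompactOn u Φ :=
  stmt2_general Φ hΦusc hΦcomp u hlsc
end

section
/- Let 𝕊¹ and 𝕊² be metric spaces and Φ : 𝕊¹ → 2^{𝕊²}∖{∅} a set-valued mapping with nonempty values. If u : 𝕊¹×𝕊² → ℝ∪{±∞} is K-inf-compact on Gr(Φ), then u is lower semi-continuous on Gr(Φ). -/
/-!
If `xₙ → p` with `xₙ ∈ Gr(Φ)` and `u xₙ ≤ λ`, then the first coordinates of `p` and of the `xₙ`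
form a compact set `K`, so `{u ≤ λ} ∩ Gr_K(Φ)` is compact, hence closed, and contains `p`.
Thus the level sets of `u` on `Gr(Φ)` are sequentially closed, hence closed in a metric space,
which is lower semi-continuity.
-/

open Filter Topology Set

theorem lowerSemicontinuousOn_of_isClosed_sublevel {X : Type*} [TopologicalSpace X]
    {f : X → EReal} {U : Set X} (hf : ∀ lam : ℝ, IsClosed {x ∈ U | f x ≤ lam}) :
    LowerSemicontinuousOn f U := by
  refine lowerSemicontinuousOn_iff_frequently.2 fun x hx y hy => ?_
  by_contra! hyx
  obtain ⟨lam, hylam, hlamx⟩ := EReal.exists_between_coe_real hyx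
  have hx_mem : x ∈ closure {x ∈ U | f x ≤ lam} := by
    refine mem_closure_iff_frequently.2 ?_
    rw [frequently_nhdsWithin_iff] at hy
    exact hy.mono fun x' ⟨hfx', hx'⟩ => ⟨hx', hfx'.trans hylam.le⟩
  exact hlamx.not_ge ((hf lam).closure_eq ▸ hx_mem).2

theorem KInfCompactOn.isSeqClosed_sublevel {S1 S2 : Type*} [TopologicalSpace S1]
    [TopologicalSpace S2] [T2Space S1] [T2Space S2] {u : S1 × S2 → EReal} {Φ : S1 → Set S2}
    (hu : KInfCompactOn u Φ) (lam : ℝ) :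
    IsSeqClosed {p : S1 × S2 | p.2 ∈ Φ p.1 ∧ u p ≤ lam} := by
  intro x p hx hxp
  set K := insert p.1 (range fun n => (x n).1)
  have hK : IsCompact K := ((continuous_fst.tendsto p).comp hxp).isCompact_insert_range
  have hsub : IsClosed {q : S1 × S2 | (q.1 ∈ K ∧ q.2 ∈ Φ q.1) ∧ u q ≤ lam} :=
    (hu K ⟨p.1, mem_insert _ _⟩ hK lam).isClosed
  have hp := hsub.mem_of_tendsto hxp <| Eventually.of_forall fun n =>
    ⟨⟨mem_insert_of_mem _ ⟨n, rfl⟩, (hx n).1⟩, (hx n).2⟩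
  exact ⟨hp.1.2, hp.2⟩

theorem stmt5_general {S1 S2 : Type*} [MetricSpace S1] [MetricSpace S2]
    (Φ : S1 → Set S2)
    (u : S1 × S2 → EReal) (hu : KInfCompactOn u Φ) :
    LowerSemicontinuousOn u {p : S1 × S2 | p.2 ∈ Φ p.1} :=
  lowerSemicontinuousOn_of_isClosed_sublevel fun lam => (hu.isSeqClosed_sublevel lam).isClosed

/-- A `K`-inf-compact function `u` on `Gr(Φ)` is lower semi-continuous on `Gr(Φ)`. -/
theorem stmt5 {S1 S2 : Type*} [MetricSpace S1] [MetricSpace S2]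
    (Φ : S1 → Set S2) (hΦne : ∀ s1, (Φ s1).Nonempty)
    (u : S1 × S2 → EReal) (hu : KInfCompactOn u Φ) :
    LowerSemicontinuousOn u {p : S1 × S2 | p.2 ∈ Φ p.1} :=
  stmt5_general Φ u hu
end

section
/- Let 𝕊¹ and 𝕊² be metric spaces and Φ : 𝕊¹ → 2^{𝕊²}∖{∅} a set-valued mapping with nonempty values. A function u : 𝕊¹×𝕊² → ℝ∪{±∞} is K-inf-compact on Gr(Φ) if and only if the following two conditions hold: (i) u is lower semi-continuous on Gr(Φ); and (ii) whenever a sequence {s¹_n} in 𝕊¹ converges to a limit s¹ ∈ 𝕊¹, every sequence {s²_n} with s²_n ∈ Φ(s¹_n) for all n such that the sequence {u(s¹_n,s²_n)} is bounded above has a limit point s² ∈ Φ(s¹). -/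
/-!
Everything is sequential. For a convergent sequence `s¹ₙ → s¹` the set `K = {s¹} ∪ {s¹ₙ}` is
compact, so `K`-inf-compactness makes the level sets of `u` over `K` compact; a sequence in such
a level set has a convergent subsequence, whose limit lies in `Gr(Φ)` and obeys the same bound.
This gives both the cluster point of (ii) and, via the sequential description of lower
semicontinuity, condition (i). Conversely, in metric spaces compactness of a level set over a
compact `K` is sequential compactness: a sequence there has first coordinates with a limit in `K`,
(ii) supplies a cluster point of the second coordinates, and (i) passes the bound to the limit.
-/

open Filter Topology Set

section SequentialLowerSemicontinuity

variable {α : Type*} [TopologicalSpace α] {s : Set α}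

theorem LowerSemicontinuousWithinAt.le_of_tendsto {γ : Type*} [LinearOrder γ] {f : α → γ}
    {a : α} (hf : LowerSemicontinuousWithinAt f s a) {x : ℕ → α} (hxs : ∀ n, x n ∈ s)
    (hx : Tendsto x atTop (𝓝 a)) {r : γ} (hr : ∀ n, f (x n) ≤ r) : f a ≤ r := by
  by_contra! hlt
  have hx' : Tendsto x atTop (𝓝[s] a) := tendsto_nhdsWithin_iff.2 ⟨hx, .of_forall hxs⟩
  obtain ⟨n, hn⟩ := (hx'.eventually (hf r hlt)).exists
  exact (hr n).not_gt hn

theorem lowerSemicontinuousOn_of_forall_tendsto [FirstCountableTopology α] {f : α → EReal}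
    (h : ∀ a ∈ s, ∀ x : ℕ → α, (∀ n, x n ∈ s) → Tendsto x atTop (𝓝 a) →
      ∀ r : ℝ, (∀ n, f (x n) ≤ r) → f a ≤ r) :
    LowerSemicontinuousOn f s := by
  intro a ha y hya
  by_contra hfreq
  obtain ⟨r, hyr, hra⟩ := EReal.exists_between_coe_real hya
  rw [not_eventually, frequently_nhdsWithin_iff] at hfreq
  obtain ⟨x, hx, hxs⟩ := exists_seq_forall_of_frequently hfreq
  have hxr : ∀ n, f (x n) ≤ r := fun n => (not_lt.1 (hxs n).1).trans hyr.le
  exact (h a ha x (fun n => (hxs n).2) hx r hxr).not_gt hra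

end SequentialLowerSemicontinuity

namespace KInfCompactOn

variable {S1 S2 : Type*} [TopologicalSpace S1] [TopologicalSpace S2]
  {Φ : S1 → Set S2} {u : S1 × S2 → EReal}

theorem isCompact_levelSet_of_tendsto (h : KInfCompactOn u Φ) {x : ℕ → S1} {a : S1}
    (hx : Tendsto x atTop (𝓝 a)) (lam : ℝ) :
    IsCompact {p : S1 × S2 | (p.1 ∈ insert a (range x) ∧ p.2 ∈ Φ p.1) ∧ u p ≤ lam} :=
  h _ (insert_nonempty _ _) hx.isCompact_insert_range lam

section FirstCountable

variable [FirstCountableTopology S1] [FirstCountableTopology S2] [T2Space S1]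

theorem exists_subseq_tendsto (h : KInfCompactOn u Φ) {x : ℕ → S1} {a : S1}
    (hx : Tendsto x atTop (𝓝 a)) {y : ℕ → S2} (hy : ∀ n, y n ∈ Φ (x n)) {lam : ℝ}
    (hu : ∀ n, u (x n, y n) ≤ lam) :
    ∃ b ∈ Φ a, u (a, b) ≤ lam ∧ ∃ φ : ℕ → ℕ, StrictMono φ ∧ Tendsto (y ∘ φ) atTop (𝓝 b) := by
  obtain ⟨⟨a', b⟩, ⟨⟨-, hb⟩, hab⟩, φ, hφ, hlim⟩ :=
    (h.isCompact_levelSet_of_tendsto hx lam).tendsto_subseq (x := fun n => (x n, y n))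
      fun n => ⟨⟨mem_insert_of_mem _ ⟨n, rfl⟩, hy n⟩, hu n⟩
  obtain rfl : a' = a :=
    tendsto_nhds_unique ((continuous_fst.tendsto _).comp hlim) (hx.comp hφ.tendsto_atTop)
  exact ⟨b, hb, hab, φ, hφ, (continuous_snd.tendsto _).comp hlim⟩

theorem exists_mapClusterPt_s6 (h : KInfCompactOn u Φ) {x : ℕ → S1} {a : S1}
    (hx : Tendsto x atTop (𝓝 a)) {y : ℕ → S2} (hy : ∀ n, y n ∈ Φ (x n))
    (hu : ∃ M : ℝ, ∀ n, u (x n, y n) ≤ M) : ∃ b ∈ Φ a, MapClusterPt b atTop y := by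
  obtain ⟨M, hM⟩ := hu
  obtain ⟨b, hb, -, φ, hφ, hyb⟩ := h.exists_subseq_tendsto hx hy hM
  exact ⟨b, hb, hyb.mapClusterPt.of_comp hφ.tendsto_atTop⟩

theorem lowerSemicontinuousOn [T2Space S2] (h : KInfCompactOn u Φ) :
    LowerSemicontinuousOn u {p : S1 × S2 | p.2 ∈ Φ p.1} := by
  refine lowerSemicontinuousOn_of_forall_tendsto fun p _ z hz hlim r hr => ?_
  obtain ⟨b, -, hb, φ, hφ, hzb⟩ :=
    h.exists_subseq_tendsto ((continuous_fst.tendsto p).comp hlim) hz hr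
  obtain rfl : b = p.2 :=
    tendsto_nhds_unique hzb (((continuous_snd.tendsto p).comp hlim).comp hφ.tendsto_atTop)
  exact hb

end FirstCountable

open TopologicalSpace in
theorem of_lowerSemicontinuousOn_of_exists_mapClusterPt [PseudoMetrizableSpace S1]
    [PseudoMetrizableSpace S2]
    (hlsc : LowerSemicontinuousOn u {p : S1 × S2 | p.2 ∈ Φ p.1})
    (hcl : ∀ (x : ℕ → S1) (a : S1), Tendsto x atTop (𝓝 a) →
      ∀ y : ℕ → S2, (∀ n, y n ∈ Φ (x n)) → (∃ M : ℝ, ∀ n, u (x n, y n) ≤ M) →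
        ∃ b ∈ Φ a, MapClusterPt b atTop y) :
    KInfCompactOn u Φ := by
  intro K _ hK lam
  refine IsSeqCompact.isCompact fun z hz => ?_
  obtain ⟨a, haK, φ, hφ, hxa⟩ := hK.tendsto_subseq fun n => (hz n).1.1
  obtain ⟨b, hb, hclb⟩ := hcl _ a hxa (fun n => (z (φ n)).2) (fun n => (hz (φ n)).1.2)
    ⟨lam, fun n => (hz (φ n)).2⟩
  obtain ⟨ψ, hψ, hyb⟩ := hclb.tendsto_subseq
  have hlim : Tendsto (z ∘ φ ∘ ψ) atTop (𝓝 (a, b)) :=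
    (hxa.comp hψ.tendsto_atTop).prodMk_nhds hyb
  refine ⟨(a, b), ⟨⟨haK, hb⟩, ?_⟩, φ ∘ ψ, hφ.comp hψ, hlim⟩
  exact LowerSemicontinuousWithinAt.le_of_tendsto (hlsc (a, b) hb) (fun n => (hz _).1.2) hlim
    fun n => (hz _).2

end KInfCompactOn

theorem stmt6_general {S1 S2 : Type*} [MetricSpace S1] [MetricSpace S2]
    (Φ : S1 → Set S2)
    (u : S1 × S2 → EReal) :
    KInfCompactOn u Φ ↔
      (LowerSemicontinuousOn u {p : S1 × S2 | p.2 ∈ Φ p.1} ∧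
       ∀ (s1seq : ℕ → S1) (s1 : S1), Tendsto s1seq atTop (nhds s1) →
         ∀ s2seq : ℕ → S2, (∀ n, s2seq n ∈ Φ (s1seq n)) →
           (∃ M : ℝ, ∀ n, u (s1seq n, s2seq n) ≤ (M : EReal)) →
           ∃ s2 ∈ Φ s1, MapClusterPt s2 atTop s2seq) :=
  ⟨fun h => ⟨h.lowerSemicontinuousOn, fun _ _ hx _ hy hu => h.exists_mapClusterPt_s6 hx hy hu⟩,
    fun ⟨hlsc, hcl⟩ => .of_lowerSemicontinuousOn_of_exists_mapClusterPt hlsc hcl⟩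

/-- `u` is `K`-inf-compact on `Gr(Φ)` if and only if (i) `u` is lower semi-continuous on
`Gr(Φ)`, and (ii) whenever a sequence `s¹ₙ → s¹` in `S1`, every sequence `s²ₙ ∈ Φ(s¹ₙ)` along
which `u (s¹ₙ, s²ₙ)` is bounded above has a limit (cluster) point `s² ∈ Φ s¹`. -/
theorem stmt6 {S1 S2 : Type*} [MetricSpace S1] [MetricSpace S2]
    (Φ : S1 → Set S2) (hΦne : ∀ s1, (Φ s1).Nonempty)
    (u : S1 × S2 → EReal) :
    KInfCompactOn u Φ ↔
      (LowerSemicontinuousOn u {p : S1 × S2 | p.2 ∈ Φ p.1} ∧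
       ∀ (s1seq : ℕ → S1) (s1 : S1), Tendsto s1seq atTop (nhds s1) →
         ∀ s2seq : ℕ → S2, (∀ n, s2seq n ∈ Φ (s1seq n)) →
           (∃ M : ℝ, ∀ n, u (s1seq n, s2seq n) ≤ (M : EReal)) →
           ∃ s2 ∈ Φ s1, MapClusterPt s2 atTop s2seq) :=
  stmt6_general Φ u
end

section
/- Let h : ℝ → [0,∞) be a convex function with h(x) → +∞ as |x| → ∞, let c̄ > 0 be a constant, and let D be a nonnegative random variable with P(D > 0) > 0 and E h(x−D) < ∞ for all x ∈ ℝ. By convexity, the limit lim_{x→−∞} h(x)/x exists in [−∞,0]; define k_h := −lim_{x→−∞} h(x)/x ∈ (0,+∞] and α* := 1 − k_h/c̄ ∈ [−∞,1). Then Assumption GB holds, i.e., there exist z < y in ℝ with (E[h(y−D)] − E[h(z−D)])/(y−z) < −c̄, if and only if α* < 0, equivalently if and only if lim_{x→−∞} h(x)/x < −c̄ (in the extended reals). -/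
/-!
Write `L` for the limit of `h x / x` at `-∞`. Convexity makes `L` a lower bound for every chord
slope of `h` (and `L < 0`, since `h → ∞` at `-∞` produces a chord of negative slope). Averaging over
the demand, every chord slope of `x ↦ E h(x - D)` is also at least `L`, so Assumption GB forces
`L < -c̄`. Conversely, if `L < r < -c̄` then `h x ≥ r x` far to the left, hence `E h(z - D) ≥ r z`
because `D ≥ 0` and `r < 0`; the chord from `z` to `0` then has slope at most `r + E h(-D) / (-z)`,
which is below `-c̄` for `z` far enough to the left.
-/

open Filter Topology Set MeasureTheory

/-- Assumption GB: there exist `z < y` with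
`(E[h(y−D)] − E[h(z−D)])/(y−z) < −c̄`. -/
def AssumptionGB (h : ℝ → ℝ) (cbar : ℝ) (μ : Measure ℝ) : Prop :=
  ∃ z y : ℝ, z < y ∧
    ((∫ s, h (y - s) ∂μ) - (∫ s, h (z - s) ∂μ)) / (y - z) < -cbar

theorem ConvexOn.le_slope_of_tendsto_div_atBot {h : ℝ → ℝ} (hconv : ConvexOn ℝ univ h)
    {L : EReal} (hL : Tendsto (fun x => ((h x / x : ℝ) : EReal)) atBot (𝓝 L))
    {a b : ℝ} (hab : a < b) : L ≤ ((h b - h a) / (b - a) : ℝ) := by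
  set m := (h b - h a) / (b - a)
  have hline : ∀ t < min a 0, h t / t ≤ m + (h a - m * a) / t := by
    intro t ht
    have ht0 : t < 0 := ht.trans_le (min_le_right _ _)
    have hta : t < a := ht.trans_le (min_le_left _ _)
    have hchord : (h a - h t) / (a - t) ≤ m :=
      hconv.slope_mono_adjacent (mem_univ t) (mem_univ b) hta hab
    rw [div_le_iff₀ (sub_pos.2 hta)] at hchord
    calc h t / t ≤ (h a + m * (t - a)) / t := div_le_div_of_nonpos_of_le ht0.le (by linarith)
      _ = m + (h a - m * a) / t := by field_simp [ht0.ne]; ring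
  have hlim : Tendsto (fun t => m + (h a - m * a) / t) atBot (𝓝 m) := by
    simpa using tendsto_const_nhds.add (tendsto_id.const_div_atBot (h a - m * a))
  refine le_of_tendsto_of_tendsto hL (EReal.tendsto_coe.2 hlim) ?_
  filter_upwards [eventually_lt_atBot (min a 0)] with t ht
  exact EReal.coe_le_coe_iff.2 (hline t ht)

theorem ConvexOn.lt_zero_of_tendsto_div_atBot {h : ℝ → ℝ} (hconv : ConvexOn ℝ univ h)
    (hatBot : Tendsto h atBot atTop) {L : EReal}
    (hL : Tendsto (fun x => ((h x / x : ℝ) : EReal)) atBot (𝓝 L)) : L < 0 := by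
  obtain ⟨x₁, hx₁, hhx₁⟩ :=
    ((eventually_lt_atBot 0).and (hatBot.eventually_gt_atTop (h 0))).exists
  calc L ≤ ((h 0 - h x₁) / (0 - x₁) : ℝ) := hconv.le_slope_of_tendsto_div_atBot hL hx₁
    _ < 0 := EReal.coe_lt_coe_iff.2 (div_neg_of_neg_of_pos (by linarith) (by linarith))

theorem le_slope_integral_comp_sub {h : ℝ → ℝ} {m : ℝ}
    (hm : ∀ a b, a < b → m ≤ (h b - h a) / (b - a)) {μ : Measure ℝ} [IsProbabilityMeasure μ]
    (hint : ∀ x, Integrable (fun s => h (x - s)) μ) {z y : ℝ} (hzy : z < y) :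
    m ≤ ((∫ s, h (y - s) ∂μ) - ∫ s, h (z - s) ∂μ) / (y - z) := by
  rw [← integral_sub (hint y) (hint z), ← integral_div]
  calc m = ∫ _, m ∂μ := by simp
    _ ≤ ∫ s, (h (y - s) - h (z - s)) / (y - z) ∂μ := by
      refine integral_mono (integrable_const m) (((hint y).sub (hint z)).div_const _) fun s => ?_
      simpa using hm (z - s) (y - s) (by linarith)

theorem lt_of_assumptionGB {h : ℝ → ℝ} (hconv : ConvexOn ℝ univ h) {cbar : ℝ}
    {μ : Measure ℝ} [IsProbabilityMeasure μ] (hint : ∀ x, Integrable (fun s => h (x - s)) μ)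
    {L : EReal} (hL : Tendsto (fun x => ((h x / x : ℝ) : EReal)) atBot (𝓝 L))
    (hGB : AssumptionGB h cbar μ) : L < ((-cbar : ℝ) : EReal) := by
  obtain ⟨z, y, hzy, hslope⟩ := hGB
  by_contra! hcL
  have hm : ∀ a b, a < b → -cbar ≤ (h b - h a) / (b - a) := fun a b hab =>
    EReal.coe_le_coe_iff.1 (hcL.trans (hconv.le_slope_of_tendsto_div_atBot hL hab))
  exact (le_slope_integral_comp_sub hm hint hzy).not_gt hslope

theorem eventually_mul_le_integral_comp_sub {h : ℝ → ℝ} {r : ℝ} (hr : r ≤ 0)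
    (hrh : ∀ᶠ x in atBot, r * x ≤ h x) {μ : Measure ℝ} [IsProbabilityMeasure μ]
    (hμ : μ (Iio 0) = 0) (hint : ∀ x, Integrable (fun s => h (x - s)) μ) :
    ∀ᶠ x in atBot, r * x ≤ ∫ s, h (x - s) ∂μ := by
  obtain ⟨X, hX⟩ := eventually_atBot.1 hrh
  filter_upwards [eventually_le_atBot X] with x hx
  have hpt : ∀ᵐ s ∂μ, r * x ≤ h (x - s) := by
    filter_upwards [measure_eq_zero_iff_ae_notMem.1 hμ] with s hs
    rw [mem_Iio, not_lt] at hs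
    nlinarith [hX (x - s) (by linarith)]
  calc r * x = ∫ _, r * x ∂μ := by simp
    _ ≤ ∫ s, h (x - s) ∂μ := integral_mono_ae (integrable_const _) (hint x) hpt

theorem assumptionGB_of_lt {h : ℝ → ℝ} {cbar : ℝ} (hc : 0 ≤ cbar)
    {μ : Measure ℝ} [IsProbabilityMeasure μ] (hμ : μ (Iio 0) = 0)
    (hint : ∀ x, Integrable (fun s => h (x - s)) μ)
    {L : EReal} (hL : Tendsto (fun x => ((h x / x : ℝ) : EReal)) atBot (𝓝 L))
    (hLc : L < ((-cbar : ℝ) : EReal)) : AssumptionGB h cbar μ := by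
  obtain ⟨r, hLr, hrc⟩ := EReal.exists_between_coe_real hLc
  have hrc : r < -cbar := EReal.coe_lt_coe_iff.1 hrc
  set H : ℝ → ℝ := fun x => ∫ s, h (x - s) ∂μ
  have hrh : ∀ᶠ x in atBot, r * x ≤ h x := by
    filter_upwards [hL.eventually_lt_const hLr, eventually_lt_atBot 0] with x hx hx0
    exact ((div_lt_iff_of_neg hx0).1 (EReal.coe_lt_coe_iff.1 hx)).le
  have hlim : Tendsto (fun z => r + H 0 / -z) atBot (𝓝 r) := by
    simpa using tendsto_const_nhds.add (tendsto_neg_atBot_atTop.const_div_atTop (H 0))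
  have hHr : ∀ᶠ z in atBot, r * z ≤ H z :=
    eventually_mul_le_integral_comp_sub (by linarith) hrh hμ hint
  obtain ⟨z, ⟨hHz, hz0⟩, hzc⟩ :=
    ((hHr.and (eventually_lt_atBot 0)).and (hlim.eventually_lt_const hrc)).exists
  refine ⟨z, 0, hz0, ?_⟩
  calc (H 0 - H z) / (0 - z) ≤ r + H 0 / -z := by
        rw [zero_sub, div_le_iff₀ (neg_pos.2 hz0), add_mul,
          div_mul_cancel₀ _ (neg_ne_zero.2 hz0.ne)]
        linarith
    _ < -cbar := hzc

theorem EReal.one_sub_neg_div_lt_zero_iff {c : ℝ} (hc : 0 < c) (L : EReal) :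
    1 - -L / c < 0 ↔ L < ((-c : ℝ) : EReal) := by
  induction L using EReal.rec with
  | bot =>
    simpa [EReal.top_div_of_pos_ne_top (EReal.coe_pos.2 hc) (EReal.coe_ne_top c)]
      using EReal.bot_lt_coe (-c)
  | top =>
    simp [EReal.bot_div_of_pos_ne_top (EReal.coe_pos.2 hc) (EReal.coe_ne_top c),
      ← EReal.coe_one]
  | coe l =>
    rw [← EReal.coe_neg, ← EReal.coe_div, ← EReal.coe_one, ← EReal.coe_sub, ← EReal.coe_zero,
      EReal.coe_lt_coe_iff, EReal.coe_lt_coe_iff, _root_.sub_neg, lt_div_iff₀ hc]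
    constructor <;> intro <;> linarith

theorem stmt10_general (h : ℝ → ℝ) (hconv : ConvexOn ℝ Set.univ h)
    (hatBot : Tendsto h atBot atTop)
    (cbar : ℝ) (hc : 0 < cbar)
    (μ : Measure ℝ) [IsProbabilityMeasure μ]
    (hD0 : μ (Set.Iio 0) = 0)
    (hint : ∀ x : ℝ, Integrable (fun s => h (x - s)) μ)
    (L : EReal) (hL : Tendsto (fun x => ((h x / x : ℝ) : EReal)) atBot (nhds L)) :
    L ≤ 0 ∧ 0 < -L ∧
    (AssumptionGB h cbar μ ↔ (1 : EReal) - (-L) / ((cbar : ℝ) : EReal) < 0) ∧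
    (AssumptionGB h cbar μ ↔ L < ((-cbar : ℝ) : EReal)) := by
  have hLneg : L < 0 := hconv.lt_zero_of_tendsto_div_atBot hatBot hL
  have hGB : AssumptionGB h cbar μ ↔ L < ((-cbar : ℝ) : EReal) :=
    ⟨lt_of_assumptionGB hconv hint hL, assumptionGB_of_lt hc.le hD0 hint hL⟩
  exact ⟨hLneg.le, EReal.neg_pos.2 hLneg,
    hGB.trans (EReal.one_sub_neg_div_lt_zero_iff hc L).symm, hGB⟩

/-- For the classic periodic-review inventory problem with convex holding/backordering cost
`h`, per-unit ordering cost `c̄ > 0`, and nonnegative demand `D` with `P(D>0) > 0` and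
`E h(x−D) < ∞` for all `x`: by convexity the limit `L = lim_{x→−∞} h(x)/x` exists in
`[−∞,0]`; with `k_h := −L ∈ (0,+∞]` and `α* := 1 − k_h/c̄ ∈ [−∞,1)`, Assumption GB holds
if and only if `α* < 0`, equivalently if and only if `L < −c̄` in the extended reals. -/
theorem stmt10 (h : ℝ → ℝ) (hconv : ConvexOn ℝ Set.univ h) (hpos : ∀ x, 0 ≤ h x)
    (hatTop : Tendsto h atTop atTop) (hatBot : Tendsto h atBot atTop)
    (cbar : ℝ) (hc : 0 < cbar)
    (μ : Measure ℝ) [IsProbabilityMeasure μ]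
    (hD0 : μ (Set.Iio 0) = 0) (hDpos : 0 < μ (Set.Ioi 0))
    (hint : ∀ x : ℝ, Integrable (fun s => h (x - s)) μ)
    (L : EReal) (hL : Tendsto (fun x => ((h x / x : ℝ) : EReal)) atBot (nhds L)) :
    L ≤ 0 ∧ 0 < -L ∧
    (AssumptionGB h cbar μ ↔ (1 : EReal) - (-L) / ((cbar : ℝ) : EReal) < 0) ∧
    (AssumptionGB h cbar μ ↔ L < ((-cbar : ℝ) : EReal)) :=
  stmt10_general h hconv hatBot cbar hc μ hD0 hint L hL
end

section
/- Let X and Y be metric spaces (Borel subsets of Polish spaces), let A be a metric space, and let P(X) denote the space of Borel probability measures on X endowed with the topology of weak convergence. Let P(dx'|x,a) be a transition probability from X×A to X that is weakly continuous, and let Q(dy|a,x) be a transition probability from A×X to Y that is continuous in total variation. Define R'(C|z,a) := ∫_X ∫_X Q(C|a,x') P(dx'|x,a) z(dx) for Borel C ⊆ Y, z ∈ P(X), a ∈ A. Then the transition probability R' from P(X)×A to Y is setwise continuous: whenever z_n → z weakly in P(X) and a_n → a in A, one has R'(C|z_n,a_n) → R'(C|z,a) for every Borel set C ⊆ Y.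 -/
open Filter Topology Set MeasureTheory
open scoped NNReal

/-- A `ProbabilityMeasure`-valued map is continuous in total variation if convergence of the
arguments implies convergence to `0` of the total variation distance
`‖μ − ν‖ = 2 sup_{C Borel} |μ(C) − ν(C)|`. -/
def TVContinuous {E Y : Type*} [TopologicalSpace E] [MetricSpace Y] [MeasurableSpace Y]
    (Q : E → ProbabilityMeasure Y) : Prop :=
  ∀ (e : ℕ → E) (e0 : E), Tendsto e atTop (nhds e0) →
    Tendsto (fun n => 2 * ⨆ C : {C : Set Y // MeasurableSet C},
      |((Q (e n)) C.1 : ℝ) - ((Q e0) C.1 : ℝ)|) atTop (nhds 0)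

open scoped BoundedContinuousFunction ENNReal

/-! The function `(a, x') ↦ Q(C|a,x')` is continuous, since `|Q(C|e) - Q(C|e')|` is bounded by
the total variation distance. Everything else follows from one fact, used twice: for a bounded
continuous `g` on `X × A`, the map `(μ, a) ↦ ∫ g(x,a) μ(dx)` is continuous on `P(X) × A`. Applied
to `μ = P(·|x,a)` it shows that the inner integral is a bounded continuous function of `(x,a)`;
applied to that function and `μ = z` it gives the theorem.

The fact holds because joint continuity of `g` and continuity of `μ` from above give a closed set
`F` of small `μ`-measure off which `g(·,b)` is uniformly close to `g(·,a)` for all `b` near `a`,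
and by the portmanteau theorem `ν(F)` stays small for `ν` near `μ`. -/

theorem TVContinuous.continuous_apply {E Y : Type*} [TopologicalSpace E] [SequentialSpace E]
    [MetricSpace Y] [MeasurableSpace Y] {Q : E → ProbabilityMeasure Y} (hQ : TVContinuous Q)
    {C : Set Y} (hC : MeasurableSet C) : Continuous fun e => (Q e C : ℝ) := by
  refine SeqContinuous.continuous fun e e₀ he => ?_
  have hbdd : ∀ n, BddAbove (range fun D : {D : Set Y // MeasurableSet D} =>
      |(Q (e n) D.1 : ℝ) - Q e₀ D.1|) := fun n =>
    ⟨1, forall_mem_range.2 fun D => abs_sub_le_of_nonneg_of_le (Q (e n) D).coe_nonneg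
      (mod_cast (Q (e n)).apply_le_one D) (Q e₀ D).coe_nonneg (mod_cast (Q e₀).apply_le_one D)⟩
  rw [tendsto_iff_dist_tendsto_zero]
  refine squeeze_zero (fun n => dist_nonneg) (fun n => ?_) (hQ e e₀ he)
  have hC_le := le_ciSup (hbdd n) ⟨C, hC⟩
  exact (Real.dist_eq _ _).trans_le
    (hC_le.trans (le_mul_of_one_le_left ((abs_nonneg _).trans hC_le) one_le_two))

section ParametricIntegral

variable {X A : Type*} [TopologicalSpace X] [MeasurableSpace X] [OpensMeasurableSpace X]
  [TopologicalSpace A] [FirstCountableTopology A]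

theorem MeasureTheory.exists_isClosed_measure_lt_eventually_dist_lt
    {E : Type*} [PseudoMetricSpace E] {f : X × A → E} (hf : Continuous f)
    (μ : Measure X) [IsFiniteMeasure μ] (a : A) {ε : ℝ} (hε : 0 < ε) {η : ℝ≥0∞} (hη : 0 < η) :
    ∃ F, IsClosed F ∧ μ F < η ∧ ∀ᶠ b in 𝓝 a, ∀ x ∉ F, dist (f (x, b)) (f (x, a)) < ε := by
  obtain ⟨V, hV⟩ := (𝓝 a).exists_antitone_basis
  set F : ℕ → Set X := fun m => (interior {x | ∀ b ∈ V m, dist (f (x, b)) (f (x, a)) < ε})ᶜ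
  have hF_closed : ∀ m, IsClosed (F m) := fun m => isOpen_interior.isClosed_compl
  have hF_anti : Antitone F := fun m n hmn =>
    compl_subset_compl.2 (interior_mono fun x hx b hb => hx b (hV.antitone hmn hb))
  have hF_empty : ⋂ m, F m = ∅ := by
    refine eq_empty_of_forall_notMem fun x hx => ?_
    have hcont : Tendsto (fun p : X × A => dist (f p) (f (p.1, a))) (𝓝 (x, a)) (𝓝 0) :=
      (hf.dist (hf.comp (continuous_fst.prodMk continuous_const))).tendsto' _ _ (dist_self _)
    rw [nhds_prod_eq] at hcont
    obtain ⟨px, hpx, pb, hpb, hp⟩ := eventually_prod_iff.1 (hcont.eventually (gt_mem_nhds hε))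
    obtain ⟨m, -, hm⟩ := hV.1.mem_iff.1 hpb
    exact mem_iInter.1 hx m
      (mem_interior_iff_mem_nhds.2 (hpx.mono fun y hy b hb => hp hy (hm hb)))
  have hF_lim : Tendsto (μ ∘ F) atTop (𝓝 0) := by
    simpa [hF_empty] using tendsto_measure_iInter_atTop
      (fun m => (hF_closed m).measurableSet.nullMeasurableSet) hF_anti ⟨0, measure_ne_top μ _⟩
  obtain ⟨m, hm⟩ := (hF_lim.eventually (gt_mem_nhds hη)).exists
  exact ⟨F m, hF_closed m, hm,
    eventually_of_mem (hV.mem m) fun b hb x hx => interior_subset (not_not.1 hx) b hb⟩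

variable [HasOuterApproxClosed X]

theorem MeasureTheory.ProbabilityMeasure.tendsto_integral_abs_sub_boundedContinuousFunction_prod
    (g : X × A →ᵇ ℝ) (μ : ProbabilityMeasure X) (a : A) :
    Tendsto (fun p : ProbabilityMeasure X × A => ∫ x, |g (x, p.2) - g (x, a)| ∂(p.1 : Measure X))
      (𝓝 (μ, a)) (𝓝 0) := by
  refine Metric.tendsto_nhds.2 fun ε hε => ?_
  set M := 2 * ‖g‖
  set δ := ε / 2 / (M + 1)
  have hM : 0 ≤ M := by positivity
  obtain ⟨F, hF_closed, hμF, hF⟩ := exists_isClosed_measure_lt_eventually_dist_lt g.continuous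
    (μ : Measure X) a (half_pos hε) (ENNReal.ofReal_pos.2 (by positivity : 0 < δ))
  have hνF : ∀ᶠ p : ProbabilityMeasure X × A in 𝓝 (μ, a),
      (p.1 : Measure X) F < ENNReal.ofReal δ :=
    eventually_lt_of_limsup_lt ((ProbabilityMeasure.limsup_measure_closed_le_of_tendsto
      continuous_fst.continuousAt hF_closed).trans_lt hμF)
  filter_upwards [hνF, continuous_snd.continuousAt.eventually hF] with ⟨ν, b⟩ hνF hb
  have hpt : ∀ x, |g (x, b) - g (x, a)| ≤ ε / 2 + F.indicator (fun _ => M) x := fun x => by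
    by_cases hx : x ∈ F
    · rw [indicator_of_mem hx, ← Real.dist_eq]
      linarith [g.dist_le_two_norm (x, b) (x, a)]
    · rw [indicator_of_notMem hx, add_zero, ← Real.dist_eq]
      exact (hb x hx).le
  have hint : ∫ x, |g (x, b) - g (x, a)| ∂(ν : Measure X) ≤ ε / 2 + M * (ν : Measure X).real F := by
    refine (integral_mono_of_nonneg (Eventually.of_forall fun x => abs_nonneg _)
      ((integrable_const _).add ((integrable_const M).indicator hF_closed.measurableSet))
      (Eventually.of_forall hpt)).trans_eq ?_
    rw [integral_add' (integrable_const _)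
      ((integrable_const M).indicator hF_closed.measurableSet),
      integral_indicator_const _ hF_closed.measurableSet]
    simp [mul_comm]
  have hνF' : (ν : Measure X).real F < δ := ENNReal.toReal_lt_of_lt_ofReal hνF
  have hMδ : M * δ < ε / 2 := calc
    M * δ < (M + 1) * δ := by gcongr; linarith
    _ = ε / 2 := mul_div_cancel₀ _ (by positivity)
  have hMF : M * (ν : Measure X).real F ≤ M * δ := mul_le_mul_of_nonneg_left hνF'.le hM
  rw [Real.dist_eq, sub_zero, abs_of_nonneg (integral_nonneg fun x => abs_nonneg _)]
  linarith

theorem MeasureTheory.ProbabilityMeasure.continuous_integral_boundedContinuousFunction_prod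
    (g : X × A →ᵇ ℝ) :
    Continuous fun p : ProbabilityMeasure X × A => ∫ x, g (x, p.2) ∂(p.1 : Measure X) := by
  refine continuous_iff_continuousAt.2 fun ⟨μ, a⟩ => ?_
  let slice (b : A) : X →ᵇ ℝ := g.compContinuous ⟨fun x => (x, b), by fun_prop⟩
  have hsection (b : A) {ν : Measure X} [IsFiniteMeasure ν] :
      Integrable (fun x => g (x, b)) ν :=
    (slice b).integrable ν
  have hdiff : Tendsto (fun p : ProbabilityMeasure X × A =>
      ∫ x, (g (x, p.2) - g (x, a)) ∂(p.1 : Measure X)) (𝓝 (μ, a)) (𝓝 0) :=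
    squeeze_zero_norm (fun p => norm_integral_le_integral_norm _)
      (tendsto_integral_abs_sub_boundedContinuousFunction_prod g μ a)
  have hfixed : Tendsto (fun p : ProbabilityMeasure X × A => ∫ x, g (x, a) ∂(p.1 : Measure X))
      (𝓝 (μ, a)) (𝓝 (∫ x, g (x, a) ∂(μ : Measure X))) :=
    ((ProbabilityMeasure.continuous_integral_boundedContinuousFunction (slice a)).comp
      continuous_fst).continuousAt
  refine (zero_add (∫ x, g (x, a) ∂(μ : Measure X)) ▸ hdiff.add hfixed).congr fun p => ?_
  rw [integral_sub (hsection p.2) (hsection a), sub_add_cancel]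

noncomputable def BoundedContinuousFunction.integralKernel {Z : Type*} [TopologicalSpace Z]
    (g : X × A →ᵇ ℝ)
    {P : Z × A → ProbabilityMeasure X} (hP : Continuous P) : Z × A →ᵇ ℝ :=
  .ofNormedAddCommGroup (fun p => ∫ x, g (x, p.2) ∂(P p : Measure X))
    ((ProbabilityMeasure.continuous_integral_boundedContinuousFunction_prod g).comp
      (hP.prodMk continuous_snd)) ‖g‖
    fun p => (norm_integral_le_of_norm_le_const
      (Eventually.of_forall fun x => g.norm_coe_le_norm _)).trans_eq (by simp)

end ParametricIntegral

theorem stmt11_general {X Y A : Type*}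
    [MetricSpace X] [MeasurableSpace X] [BorelSpace X]
    [MetricSpace Y] [MeasurableSpace Y]
    [MetricSpace A]
    (P : X × A → ProbabilityMeasure X) (hP : Continuous P)
    (Q : A × X → ProbabilityMeasure Y) (hQ : TVContinuous Q) :
    ∀ (zs : ℕ → ProbabilityMeasure X) (as : ℕ → A)
      (z : ProbabilityMeasure X) (a : A),
      Tendsto zs atTop (nhds z) → Tendsto as atTop (nhds a) →
      ∀ C : Set Y, MeasurableSet C →
        Tendsto (fun n => ∫ x, ∫ x', ((Q (as n, x')) C : ℝ)
            ∂(P (x, as n) : Measure X) ∂(zs n : Measure X)) atTop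
          (nhds (∫ x, ∫ x', ((Q (a, x')) C : ℝ)
            ∂(P (x, a) : Measure X) ∂(z : Measure X))) := by
  intro zs as z a hz ha C hC
  let q : X × A →ᵇ ℝ := .ofNormedAddCommGroup (fun p => (Q (p.2, p.1) C : ℝ))
    ((hQ.continuous_apply hC).comp continuous_swap) 1 fun p => by
      simp [(Q (p.2, p.1)).apply_le_one C]
  exact ((ProbabilityMeasure.continuous_integral_boundedContinuousFunction_prod
    (q.integralKernel hP)).tendsto (z, a)).comp (hz.prodMk_nhds ha)

/-- If the transition probability `P` from `X × A` to `X` is weakly continuous and the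
transition probability `Q` from `A × X` to `Y` is continuous in total variation, then
`R'(C|z,a) = ∫_X ∫_X Q(C|a,x') P(dx'|x,a) z(dx)` is setwise continuous: whenever
`zₙ → z` weakly and `aₙ → a`, `R'(C|zₙ,aₙ) → R'(C|z,a)` for every Borel set `C ⊆ Y`. -/
theorem stmt11 {X Y A : Type*}
    [MetricSpace X] [MeasurableSpace X] [BorelSpace X]
    [MetricSpace Y] [MeasurableSpace Y] [BorelSpace Y]
    [MetricSpace A]
    (P : X × A → ProbabilityMeasure X) (hP : Continuous P)
    (Q : A × X → ProbabilityMeasure Y) (hQ : TVContinuous Q) :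
    ∀ (zs : ℕ → ProbabilityMeasure X) (as : ℕ → A)
      (z : ProbabilityMeasure X) (a : A),
      Tendsto zs atTop (nhds z) → Tendsto as atTop (nhds a) →
      ∀ C : Set Y, MeasurableSet C →
        Tendsto (fun n => ∫ x, ∫ x', ((Q (as n, x')) C : ℝ)
            ∂(P (x, as n) : Measure X) ∂(zs n : Measure X)) atTop
          (nhds (∫ x, ∫ x', ((Q (a, x')) C : ℝ)
            ∂(P (x, a) : Measure X) ∂(z : Measure X))) :=
  stmt11_general P hP Q hQ
end

section
/- Let X and Y be metric spaces (Borel subsets of Polish spaces), let A be a metric space, and let P(X) denote the space of Borel probability measures on X endowed with the topology of weak convergence. If the transition probability P(dx'|x,a) from X×A to X is weakly continuous and the transition probability Q(dy|a,x) from A×X to Y is weakly continuous, then the transition probability R' from P(X)×A to Y defined by R'(C|z,a) := ∫_X ∫_X Q(C|a,x') P(dx'|x,a) z(dx) for Borel C ⊆ Y is weakly continuous: whenever z_n → z weakly in P(X) and a_n → a in A, the measures R'(·|z_n,a_n) converge weakly to R'(·|z,a). -/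
open Filter Topology Set MeasureTheory
open scoped BoundedContinuousFunction

/-
Let `aₙ → a` and `μₙ → μ` weakly. The oscillation `|h(x, aₙ) - h(x, a)|` for `n ≥ N` is dominated
by its supremum over the compact set `{a} ∪ {aₘ : m ≥ N}`, which is continuous and bounded in `x`.
Integrating this envelope against `μₙ` converges to its integral against `μ`, which tends to `0`
as `N → ∞` by dominated convergence. Hence `∫ h(x, aₙ) dμₙ → ∫ h(x, a) dμ` for every bounded
continuous `h`. Applied first to `Q` (in the form of `x' ↦ ∫ f dQ(a, x')`) and then to `P`, this
shows that both inner integrals are jointly continuous, and a final application to `zₙ → z`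
gives the theorem.
-/

lemma tendsto_zero_of_le_of_tendsto_of_tendsto {u : ℕ → ℝ} {v : ℕ → ℕ → ℝ} {c : ℕ → ℝ}
    (hu : ∀ n, 0 ≤ u n) (huv : ∀ N n, N ≤ n → u n ≤ v N n)
    (hv : ∀ N, Tendsto (v N) atTop (𝓝 (c N))) (hc : Tendsto c atTop (𝓝 0)) :
    Tendsto u atTop (𝓝 0) := by
  refine tendsto_order.2 ⟨fun l hl => Eventually.of_forall fun n => hl.trans_le (hu n),
    fun ε hε => ?_⟩
  obtain ⟨N, hN⟩ := (hc.eventually (gt_mem_nhds hε)).exists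
  filter_upwards [(hv N).eventually (gt_mem_nhds hN), eventually_ge_atTop N] with n hvn hn
  exact (huv N n hn).trans_lt hvn

section TailSup

variable {X A : Type*}

noncomputable def tailSup (h : X × A → ℝ) (as : ℕ → A) (a : A) (N : ℕ) (x : X) : ℝ :=
  sSup ((fun b => |h (x, b) - h (x, a)|) '' insert a (range fun n => as (n + N)))

variable {h : X × A → ℝ} {as : ℕ → A} {a : A}

lemma tailSup_le {N : ℕ} {x : X} {C : ℝ} (hC₀ : 0 ≤ C)
    (hC : ∀ n, N ≤ n → |h (x, as n) - h (x, a)| ≤ C) : tailSup h as a N x ≤ C := by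
  refine csSup_le (insert_nonempty _ _ |>.image _) ?_
  rintro _ ⟨b, rfl | ⟨n, rfl⟩, rfl⟩
  · simpa using hC₀
  · exact hC _ (Nat.le_add_left N n)

variable [TopologicalSpace X] [TopologicalSpace A]

lemma continuous_tailSup (hh : Continuous h) (ha : Tendsto as atTop (𝓝 a)) (N : ℕ) :
    Continuous (tailSup h as a N) :=
  (ha.comp (tendsto_add_atTop_nat N)).isCompact_insert_range.continuous_sSup (by fun_prop)

lemma abs_sub_le_tailSup (hh : Continuous h) (ha : Tendsto as atTop (𝓝 a)) {N n : ℕ}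
    (hn : N ≤ n) (x : X) : |h (x, as n) - h (x, a)| ≤ tailSup h as a N x := by
  refine le_csSup (((ha.comp (tendsto_add_atTop_nat N)).isCompact_insert_range).bddAbove_image
    (by fun_prop)) (mem_image_of_mem _ (mem_insert_of_mem _ ⟨n - N, ?_⟩))
  simp only [Nat.sub_add_cancel hn]

lemma tailSup_nonneg (hh : Continuous h) (ha : Tendsto as atTop (𝓝 a)) (N : ℕ) (x : X) :
    0 ≤ tailSup h as a N x :=
  (abs_nonneg _).trans (abs_sub_le_tailSup hh ha le_rfl x)

lemma tendsto_tailSup (hh : Continuous h) (ha : Tendsto as atTop (𝓝 a)) (x : X) :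
    Tendsto (fun N => tailSup h as a N x) atTop (𝓝 0) := by
  refine tendsto_order.2 ⟨fun l hl => Eventually.of_forall fun N =>
    hl.trans_le (tailSup_nonneg hh ha N x), fun ε hε => ?_⟩
  obtain ⟨δ, hδ, hδε⟩ := exists_between hε
  have hconv : Tendsto (fun n => |h (x, as n) - h (x, a)|) atTop (𝓝 0) := by
    simpa using (((hh.comp (Continuous.prodMk_right x)).tendsto a).comp ha |>.sub_const
      (h (x, a))).abs
  obtain ⟨N₀, hN₀⟩ := eventually_atTop.1 (hconv.eventually (ge_mem_nhds hδ))
  filter_upwards [eventually_ge_atTop N₀] with N hN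
  exact (tailSup_le hδ.le fun n hn => hN₀ n (hN.trans hn)).trans_lt hδε

end TailSup

namespace MeasureTheory.ProbabilityMeasure

variable {X A : Type*} [TopologicalSpace X] [MeasurableSpace X] [OpensMeasurableSpace X]
  [TopologicalSpace A]

theorem norm_integral_prodMk_le (h : X × A →ᵇ ℝ) (b : A) (μ : ProbabilityMeasure X) :
    ‖∫ x, h (x, b) ∂μ‖ ≤ ‖h‖ :=
  ((h.compContinuous ⟨fun x => (x, b), by fun_prop⟩).norm_integral_le_norm _).trans
    (h.norm_compContinuous_le _)

theorem tendsto_integral_prodMk (h : X × A →ᵇ ℝ) {μs : ℕ → ProbabilityMeasure X}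
    {μ : ProbabilityMeasure X} (hμ : Tendsto μs atTop (𝓝 μ)) {as : ℕ → A} {a : A}
    (ha : Tendsto as atTop (𝓝 a)) :
    Tendsto (fun n => ∫ x, h (x, as n) ∂μs n) atTop (𝓝 (∫ x, h (x, a) ∂μ)) := by
  have hsection (b : A) (ν : ProbabilityMeasure X) : Integrable (fun x => h (x, b)) ν :=
    (h.compContinuous ⟨fun x => (x, b), by fun_prop⟩).integrable _
  have hF_le (N : ℕ) (x : X) : ‖tailSup h as a N x‖ ≤ 2 * ‖h‖ := by
    rw [Real.norm_of_nonneg (tailSup_nonneg h.continuous ha N x)]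
    exact tailSup_le (by positivity) fun n _ => h.dist_le_two_norm _ _
  let F (N : ℕ) : X →ᵇ ℝ :=
    .ofNormedAddCommGroup (tailSup h as a N) (continuous_tailSup h.continuous ha N) _ (hF_le N)
  have hF_lim : Tendsto (fun N => ∫ x, F N x ∂μ) atTop (𝓝 0) := by
    simpa using tendsto_integral_of_dominated_convergence (fun _ => 2 * ‖h‖)
      (fun N => (F N).continuous.aestronglyMeasurable) (integrable_const _)
      (fun N => Eventually.of_forall (hF_le N))
      (Eventually.of_forall (tendsto_tailSup h.continuous ha))
  have hdiff : Tendsto (fun n => ‖∫ x, h (x, as n) ∂μs n - ∫ x, h (x, a) ∂μs n‖) atTop (𝓝 0) := by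
    refine tendsto_zero_of_le_of_tendsto_of_tendsto (fun _ => norm_nonneg _) (fun N n hn => ?_)
      (fun N => tendsto_iff_forall_integral_tendsto.1 hμ (F N)) hF_lim
    rw [← integral_sub (hsection _ _) (hsection _ _)]
    exact norm_integral_le_of_norm_le ((F N).integrable _)
      (Eventually.of_forall (abs_sub_le_tailSup h.continuous ha hn))
  have hlim : Tendsto (fun n => ∫ x, h (x, a) ∂μs n) atTop (𝓝 (∫ x, h (x, a) ∂μ)) :=
    tendsto_iff_forall_integral_tendsto.1 hμ (h.compContinuous ⟨fun x => (x, a), by fun_prop⟩)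
  simpa only [sub_add_cancel, zero_add] using
    (tendsto_zero_iff_norm_tendsto_zero.2 hdiff).add hlim

theorem continuous_integral_prodMk {E : Type*} [TopologicalSpace E] [SequentialSpace E]
    {κ : E → ProbabilityMeasure X} (hκ : Continuous κ) {σ : E → A} (hσ : Continuous σ)
    (h : X × A →ᵇ ℝ) : Continuous fun e => ∫ x, h (x, σ e) ∂κ e :=
  continuous_iff_seqContinuous.2 fun _ _ hu =>
    tendsto_integral_prodMk h ((hκ.tendsto _).comp hu) ((hσ.tendsto _).comp hu)

end MeasureTheory.ProbabilityMeasure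

/-- If the transition probabilities `P` from `X × A` to `X` and `Q` from `A × X` to `Y` are
weakly continuous, then the transition probability
`R'(dy|z,a) = ∫_X ∫_X Q(dy|a,x') P(dx'|x,a) z(dx)` from `P(X) × A` to `Y` is weakly
continuous: whenever `zₙ → z` weakly and `aₙ → a`, one has
`∫ f dR'(·|zₙ,aₙ) → ∫ f dR'(·|z,a)` for every bounded continuous `f : Y → ℝ`. -/
theorem stmt13 {X Y A : Type*}
    [MetricSpace X] [MeasurableSpace X] [BorelSpace X]
    [MetricSpace Y] [MeasurableSpace Y] [BorelSpace Y]
    [MetricSpace A]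
    (P : X × A → ProbabilityMeasure X) (hP : Continuous P)
    (Q : A × X → ProbabilityMeasure Y) (hQ : Continuous Q) :
    ∀ (zs : ℕ → ProbabilityMeasure X) (as : ℕ → A)
      (z : ProbabilityMeasure X) (a : A),
      Tendsto zs atTop (nhds z) → Tendsto as atTop (nhds a) →
      ∀ f : BoundedContinuousFunction Y ℝ,
        Tendsto (fun n => ∫ x, ∫ x', ∫ y, f y
            ∂(Q (as n, x') : Measure Y) ∂(P (x, as n) : Measure X) ∂(zs n : Measure X))
          atTop
          (nhds (∫ x, ∫ x', ∫ y, f y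
            ∂(Q (a, x') : Measure Y) ∂(P (x, a) : Measure X) ∂(z : Measure X))) := by
  intro zs as z a hz ha f
  let φ : X × A →ᵇ ℝ := .ofNormedAddCommGroup (fun p => ∫ y, f y ∂(Q p.swap : Measure Y))
    ((ProbabilityMeasure.continuous_integral_boundedContinuousFunction f).comp
      (hQ.comp continuous_swap)) ‖f‖ fun _ => f.norm_integral_le_norm _
  let G : X × A →ᵇ ℝ := .ofNormedAddCommGroup (fun p => ∫ x', φ (x', p.2) ∂(P p : Measure X))
    (ProbabilityMeasure.continuous_integral_prodMk hP continuous_snd φ) ‖φ‖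
    fun _ => ProbabilityMeasure.norm_integral_prodMk_le φ _ _
  exact ProbabilityMeasure.tendsto_integral_prodMk G hz ha
end

section
/- Let K ≥ 0 be a fixed ordering cost, c̄ > 0 a per-unit ordering cost, h : ℝ → [0,∞) a convex function with h(0) = 0 and h(x) → +∞ as |x| → ∞, and let μ be a Borel probability measure on [0,∞) (the distribution of the demand D) such that ∫ h(x−s) μ(ds) < ∞ for all x ∈ ℝ. Then the one-step cost function c : ℝ×[0,∞) → ℝ defined by c(x,a) := K·1{a > 0} + c̄·a + ∫ h(x+a−s) μ(ds) is inf-compact on ℝ×[0,∞): for every λ ∈ ℝ the level set {(x,a) ∈ ℝ×[0,∞) : c(x,a) ≤ λ} is compact. -/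
open Filter Topology Set MeasureTheory

/-!
For convex `h` with `h 0 = 0` the slope `h t / t` is monotone, so coercivity forces linear
growth: `α |t| - β ≤ h t` with `α > 0`. Hence the demand is integrable and the expected
holding cost `G y = ∫ h (y - s) dμ(s)` satisfies `G y ≥ α |y| - γ`; `G` is convex, hence
continuous. On a level set `c(x, a) ≤ λ` this bounds both `a` and `|x + a|`, and the set is
closed because the fixed-cost term `K · 1{a > 0}` is the indicator of an open set with
`K ≥ 0`, hence lower semicontinuous.
-/

theorem ConvexOn.slope_mul_sub_le {f : ℝ → ℝ} (hf : ConvexOn ℝ univ f) (hf0 : f 0 = 0)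
    (hpos : ∀ x, 0 ≤ f x) {t₀ : ℝ} (ht₀ : t₀ ≠ 0) (t : ℝ) : f t₀ / t₀ * (t - t₀) ≤ f t := by
  have secant : ∀ {x y : ℝ}, x ≠ 0 → y ≠ 0 → x ≤ y → f x / x ≤ f y / y := fun hx hy hxy => by
    simpa [hf0] using hf.secant_mono (mem_univ 0) (mem_univ _) (mem_univ _) hx hy hxy
  have hsplit : f t₀ / t₀ * (t - t₀) = f t₀ / t₀ * t - f t₀ := by
    rw [mul_sub, div_mul_cancel₀ _ ht₀]
  rcases ht₀.lt_or_gt with ht₀neg | ht₀pos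
  · rcases le_or_gt t₀ t with ht | ht
    · exact (mul_nonpos_of_nonpos_of_nonneg (div_nonpos_of_nonneg_of_nonpos (hpos t₀) ht₀neg.le)
        (sub_nonneg.2 ht)).trans (hpos t)
    · have hs : f t₀ / t₀ * t ≤ f t :=
        (div_le_iff_of_neg (ht.trans ht₀neg)).1 (secant (ht.trans ht₀neg).ne ht₀ ht.le)
      linarith [hpos t₀]
  · rcases le_or_gt t t₀ with ht | ht
    · exact (mul_nonpos_of_nonneg_of_nonpos (div_nonneg (hpos t₀) ht₀pos.le)
        (sub_nonpos.2 ht)).trans (hpos t)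
    · have hs : f t₀ / t₀ * t ≤ f t :=
        (le_div_iff₀ (ht₀pos.trans ht)).1 (secant ht₀ (ht₀pos.trans ht).ne' ht.le)
      linarith [hpos t₀]

theorem ConvexOn.exists_mul_abs_sub_le {f : ℝ → ℝ} (hf : ConvexOn ℝ univ f) (hf0 : f 0 = 0)
    (hpos : ∀ x, 0 ≤ f x) (hatTop : Tendsto f atTop atTop) (hatBot : Tendsto f atBot atTop) :
    ∃ α > 0, ∃ β, ∀ t, α * |t| - β ≤ f t := by
  obtain ⟨t₁, ht₁, hft₁⟩ : ∃ t₁ : ℝ, 0 < t₁ ∧ 0 < f t₁ :=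
    ((eventually_gt_atTop 0).and (hatTop.eventually_gt_atTop 0)).exists
  obtain ⟨t₂, ht₂, hft₂⟩ : ∃ t₂ : ℝ, t₂ < 0 ∧ 0 < f t₂ :=
    ((eventually_lt_atBot 0).and (hatBot.eventually_gt_atTop 0)).exists
  set c₁ := f t₁ / t₁
  set c₂ := f t₂ / t₂
  have hc₁ : 0 < c₁ := div_pos hft₁ ht₁
  have hc₂ : c₂ < 0 := div_neg_of_pos_of_neg hft₂ ht₂
  have hc₁t₁ : c₁ * t₁ = f t₁ := div_mul_cancel₀ _ ht₁.ne'
  have hc₂t₂ : c₂ * t₂ = f t₂ := div_mul_cancel₀ _ ht₂.ne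
  refine ⟨min c₁ (-c₂), lt_min hc₁ (neg_pos.2 hc₂), f t₁ + f t₂, fun t => ?_⟩
  have h₁ := hf.slope_mul_sub_le hf0 hpos ht₁.ne' t
  have h₂ := hf.slope_mul_sub_le hf0 hpos ht₂.ne t
  rcases le_total 0 t with ht | ht
  · have : min c₁ (-c₂) * |t| ≤ c₁ * t := by
      rw [abs_of_nonneg ht]; exact mul_le_mul_of_nonneg_right (min_le_left _ _) ht
    linarith
  · have : min c₁ (-c₂) * |t| ≤ -c₂ * -t := by
      rw [abs_of_nonpos ht]; exact mul_le_mul_of_nonneg_right (min_le_right _ _) (neg_nonneg.2 ht)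
    linarith

theorem integrable_abs_of_mul_abs_sub_le {μ : Measure ℝ} [IsFiniteMeasure μ] {f : ℝ → ℝ}
    {α β : ℝ} (hα : 0 < α) (hf : ∀ t, α * |t| - β ≤ f t) (hi : Integrable (fun s => f (-s)) μ) :
    Integrable (fun s => |s|) μ := by
  refine ((hi.add (integrable_const β)).const_mul α⁻¹).mono'
    continuous_abs.aestronglyMeasurable (ae_of_all _ fun s => ?_)
  rw [Real.norm_eq_abs, abs_abs, le_inv_mul_iff₀ hα]
  simpa using hf (-s)

theorem mul_abs_sub_le_integral_comp_sub {μ : Measure ℝ} [IsProbabilityMeasure μ] {f : ℝ → ℝ}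
    {α β : ℝ} (hα : 0 ≤ α) (hf : ∀ t, α * |t| - β ≤ f t) (habs : Integrable (fun s => |s|) μ)
    {y : ℝ} (hi : Integrable (fun s => f (y - s)) μ) :
    α * |y| - (α * ∫ s, |s| ∂μ + β) ≤ ∫ s, f (y - s) ∂μ := by
  have hint : Integrable (fun s => α * |y| - α * |s| - β) μ :=
    ((integrable_const _).sub (habs.const_mul α)).sub (integrable_const β)
  calc α * |y| - (α * ∫ s, |s| ∂μ + β) = ∫ s, (α * |y| - α * |s| - β) ∂μ := by
        rw [integral_sub (f := fun s => α * |y| - α * |s|)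
            ((integrable_const _).sub (habs.const_mul α)) (integrable_const β),
          integral_sub (integrable_const _) (habs.const_mul α)]
        simp only [integral_const, integral_const_mul, probReal_univ, one_smul]
        ring
    _ ≤ ∫ s, f (y - s) ∂μ := integral_mono hint hi fun s => by
        have := mul_le_mul_of_nonneg_left (abs_sub_abs_le_abs_sub y s) hα
        linarith [hf (y - s)]

theorem ConvexOn.integral_comp_sub {μ : Measure ℝ} {f : ℝ → ℝ} (hf : ConvexOn ℝ univ f)
    (hi : ∀ y, Integrable (fun s => f (y - s)) μ) :
    ConvexOn ℝ univ (fun y => ∫ s, f (y - s) ∂μ) :=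
  integral_convexOn_of_integrand_ae convex_univ
    (ae_of_all _ fun s => by
      simpa [sub_eq_neg_add, Function.comp_def] using hf.translate_right (-s))
    fun y _ => hi y

/-- The one-step cost `c(x, a)`, with the expected holding cost `E h (y - D)` written `G y`. -/
noncomputable def orderCost (K cbar : ℝ) (G : ℝ → ℝ) (p : ℝ × ℝ) : ℝ :=
  (if 0 < p.2 then K else 0) + cbar * p.2 + G (p.1 + p.2)

section orderCost

variable {K cbar : ℝ} {G : ℝ → ℝ}

theorem lowerSemicontinuous_orderCost (hK : 0 ≤ K) (hG : Continuous G) :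
    LowerSemicontinuous (orderCost K cbar G) := by
  have hfixed : LowerSemicontinuous fun p : ℝ × ℝ => if 0 < p.2 then K else 0 :=
    (isOpen_lt continuous_const continuous_snd).lowerSemicontinuous_indicator (y := K) hK
  have hrest : Continuous fun p : ℝ × ℝ => cbar * p.2 + G (p.1 + p.2) := by fun_prop
  unfold orderCost
  simpa only [add_assoc] using hfixed.add hrest.lowerSemicontinuous

theorem isClosed_orderCost_le (hK : 0 ≤ K) (hG : Continuous G) (lam : ℝ) :
    IsClosed {p : ℝ × ℝ | 0 ≤ p.2 ∧ orderCost K cbar G p ≤ lam} :=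
  (isClosed_le continuous_const continuous_snd).inter
    ((lowerSemicontinuous_orderCost hK hG).isClosed_preimage lam)

theorem orderCost_le_subset (hK : 0 ≤ K) (hc : 0 < cbar) {α γ : ℝ} (hα : 0 < α)
    (hG : ∀ y, α * |y| - γ ≤ G y) (lam : ℝ) :
    {p : ℝ × ℝ | 0 ≤ p.2 ∧ orderCost K cbar G p ≤ lam} ⊆
      Icc (-((lam + γ) / α) - (lam + γ) / cbar) ((lam + γ) / α) ×ˢ Icc 0 ((lam + γ) / cbar) := by
  rintro ⟨x, a⟩ ⟨ha, hle⟩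
  simp only [orderCost] at hle
  have hfixed : 0 ≤ if 0 < a then K else 0 := by split_ifs <;> simp [hK]
  have hGxa := hG (x + a)
  have hxa : α * |x + a| ≤ lam + γ := by linarith [mul_nonneg hc.le ha]
  have haA : a ≤ (lam + γ) / cbar := by
    rw [le_div_iff₀ hc]
    linarith [mul_nonneg hα.le (abs_nonneg (x + a))]
  rw [← le_div_iff₀' hα, abs_le] at hxa
  exact ⟨⟨by linarith, by linarith⟩, ha, haA⟩

theorem isCompact_orderCost_le (hK : 0 ≤ K) (hc : 0 < cbar) (hGc : Continuous G) {α γ : ℝ}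
    (hα : 0 < α) (hG : ∀ y, α * |y| - γ ≤ G y) (lam : ℝ) :
    IsCompact {p : ℝ × ℝ | 0 ≤ p.2 ∧ orderCost K cbar G p ≤ lam} :=
  (isCompact_Icc.prod isCompact_Icc).of_isClosed_subset (isClosed_orderCost_le hK hGc lam)
    (orderCost_le_subset hK hc hα hG lam)

end orderCost

theorem stmt15_general (K cbar : ℝ) (hK : 0 ≤ K) (hc : 0 < cbar)
    (h : ℝ → ℝ) (hconv : ConvexOn ℝ Set.univ h) (hpos : ∀ x, 0 ≤ h x) (h0 : h 0 = 0)
    (hatTop : Tendsto h atTop atTop) (hatBot : Tendsto h atBot atTop)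
    (μ : Measure ℝ) [IsProbabilityMeasure μ]
    (hint : ∀ x : ℝ, Integrable (fun s => h (x - s)) μ) :
    ∀ lam : ℝ, IsCompact {p : ℝ × ℝ | 0 ≤ p.2 ∧
      (if 0 < p.2 then K else 0) + cbar * p.2 + ∫ s, h (p.1 + p.2 - s) ∂μ ≤ lam} := by
  obtain ⟨α, hα, β, hβ⟩ := hconv.exists_mul_abs_sub_le h0 hpos hatTop hatBot
  have habs : Integrable (fun s => |s|) μ :=
    integrable_abs_of_mul_abs_sub_le hα hβ (by simpa using hint 0)
  have hGc : Continuous fun y => ∫ s, h (y - s) ∂μ :=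
    continuousOn_univ.1 ((hconv.integral_comp_sub hint).continuousOn isOpen_univ)
  exact isCompact_orderCost_le hK hc hGc hα
    (fun y => mul_abs_sub_le_integral_comp_sub hα.le hβ habs (hint y))

/-- In the classic periodic-review inventory model with backorders, with fixed ordering cost
`K ≥ 0`, per-unit ordering cost `c̄ > 0`, convex holding/backordering cost `h ≥ 0` with
`h 0 = 0` and `h(x) → ∞` as `|x| → ∞`, and demand distribution `μ` on `[0,∞)` with
`∫ h(x−s) μ(ds) < ∞` for all `x`, the one-step cost
`c(x,a) = K·1{a>0} + c̄·a + ∫ h(x+a−s) μ(ds)` is inf-compact on `ℝ × [0,∞)`: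
all level sets `{(x,a) : a ≥ 0, c(x,a) ≤ λ}`, `λ ∈ ℝ`, are compact. -/
theorem stmt15 (K cbar : ℝ) (hK : 0 ≤ K) (hc : 0 < cbar)
    (h : ℝ → ℝ) (hconv : ConvexOn ℝ Set.univ h) (hpos : ∀ x, 0 ≤ h x) (h0 : h 0 = 0)
    (hatTop : Tendsto h atTop atTop) (hatBot : Tendsto h atBot atTop)
    (μ : Measure ℝ) [IsProbabilityMeasure μ] (hμ0 : μ (Set.Iio 0) = 0)
    (hint : ∀ x : ℝ, Integrable (fun s => h (x - s)) μ) :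
    ∀ lam : ℝ, IsCompact {p : ℝ × ℝ | 0 ≤ p.2 ∧
      (if 0 < p.2 then K else 0) + cbar * p.2 + ∫ s, h (p.1 + p.2 - s) ∂μ ≤ lam} :=
  stmt15_general K cbar hK hc h hconv hpos h0 hatTop hatBot μ hint
end
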